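/- arXiv:math/0507108 — 4 statements merged into one kernel-verified Lean document; each statement's English description precedes it below -/
import Mathlib

section
/- For all real numbers a ≥ b > 0, writing e² = 1 − b²/a², one has the identity of convergent series 2a · ∑_{m=0}^∞ (−1/(2m−1)) · (C(2m,m)/4^m)² · e^{2m} = (a+b) · ∑_{n=0}^∞ (C(2n,n)/((2n−1)·4^n))² · ((a−b)/(a+b))^{2n}. -/
/-!
Both sides are `1 / π` times the perimeter `∫₀^{2π} √(a² cos² θ + b² sin² θ) dθ`.

For Maclaurin's series, the integrand is `a √(1 - e² sin² θ)`: expand the square root by the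
binomial series and integrate termwise with Wallis' integrals
`∫₀^{2π} sin^{2n} θ dθ = 2π C(2n,n) / 4ⁿ`.

For Ivory's series, put `h = (a - b) / (a + b)`. Then
`a cos θ - i b sin θ = e^{-iθ} (a + b) / 2 · (1 + h e^{2iθ})`, so the integrand is
`(a + b) / 2 · |√(1 + h e^{2iθ})|²`. Expanding `√(1 + h e^{2iθ}) = Σ C(1/2,n) hⁿ e^{2inθ}` by the
binomial series, Parseval's identity gives `(a + b) / 2 · 2π Σ C(1/2,n)² h^{2n}`.
-/

open Real Finset

theorem Ring.succ_mul_choose_succ {K : Type*} [Field K] [CharZero K] (r : K) (k : ℕ) :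
    (k + 1) * Ring.choose r (k + 1) = (r - k) * Ring.choose r k := by
  simp only [Ring.choose_eq_smul, descPochhammer_succ_right, Polynomial.smeval_mul,
    Nat.factorial_succ, smul_eq_mul]
  simp [Polynomial.smeval_natCast]
  field_simp

theorem two_mul_natCast_sub_one_ne_zero {K : Type*} [Field K] [CharZero K] (n : ℕ) :
    (2 * n - 1 : K) ≠ 0 := by
  have : ((2 * n - 1 : ℤ) : K) ≠ 0 := Int.cast_ne_zero.mpr (by omega)
  exact_mod_cast this

theorem neg_one_pow_mul_choose_one_half {K : Type*} [Field K] [CharZero K] (n : ℕ) :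
    (-1) ^ n * Ring.choose (1 / 2 : K) n = -1 / (2 * n - 1) * ((2 * n).choose n / 4 ^ n) := by
  induction n with
  | zero => simp
  | succ k ih =>
    have hk : (k : K) * 2 - 1 ≠ 0 := by rw [mul_comm]; exact two_mul_natCast_sub_one_ne_zero k
    have hk1 := two_mul_natCast_sub_one_ne_zero (K := K) (k + 1)
    push_cast at hk1
    have hk0 : (k : K) + 1 ≠ 0 := by exact_mod_cast k.succ_ne_zero
    have h4 : (4 : K) ^ k ≠ 0 := pow_ne_zero _ (by norm_num)
    have hcb : ((k : K) + 1) * (2 * (k + 1)).choose (k + 1) =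
        2 * (2 * k + 1) * (2 * k).choose k := by
      exact_mod_cast Nat.succ_mul_centralBinom_succ k
    have half : ((k : K) - 1 / 2) * (-1 / (2 * k - 1)) = -1 / 2 := by field_simp
    rw [← mul_right_inj' hk0]
    calc ((k : K) + 1) * ((-1) ^ (k + 1) * Ring.choose (1 / 2) (k + 1))
        = (k - 1 / 2) * ((-1) ^ k * Ring.choose (1 / 2 : K) k) := by
          rw [mul_left_comm, Ring.succ_mul_choose_succ]; ring
      _ = _ := by
        rw [ih, ← mul_assoc, half]
        push_cast
        field_simp
        linear_combination (2 * 4 ^ k : K) * hcb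

theorem choose_one_half_sq (n : ℕ) :
    Ring.choose (1 / 2 : ℝ) n ^ 2 = ((2 * n).choose n / ((2 * n - 1) * 4 ^ n)) ^ 2 := by
  calc Ring.choose (1 / 2 : ℝ) n ^ 2 = ((-1) ^ n * Ring.choose (1 / 2 : ℝ) n) ^ 2 := by
        rw [mul_pow, ← pow_mul, pow_mul', neg_one_sq, one_pow, one_mul]
    _ = _ := by
      rw [neg_one_pow_mul_choose_one_half, neg_div, neg_mul, neg_sq, div_mul_div_comm, one_mul]

theorem mem_eball_zero_one_of_norm_lt_one {𝕂 : Type*} [RCLike 𝕂] {z : 𝕂} (hz : ‖z‖ < 1) :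
    z ∈ Metric.eball (0 : 𝕂) 1 := by
  rw [Metric.mem_eball, edist_zero_right, ← ofReal_norm]
  exact ENNReal.ofReal_lt_one.mpr hz

theorem summable_norm_choose_mul_pow {𝕂 : Type*} [RCLike 𝕂] (a : 𝕂) {z : 𝕂} (hz : ‖z‖ < 1) :
    Summable fun n ↦ ‖Ring.choose a n * z ^ n‖ := by
  simpa [binomialSeries, FormalMultilinearSeries.ofScalars_apply_eq, mul_comm] using
    (binomialSeries 𝕂 a).summable_norm_apply
      (Metric.eball_subset_eball binomialSeries_radius_ge_one
        (mem_eball_zero_one_of_norm_lt_one hz))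

theorem Complex.hasSum_one_add_cpow {a z : ℂ} (hz : ‖z‖ < 1) :
    HasSum (fun n ↦ Ring.choose a n * z ^ n) ((1 + z) ^ a) := by
  simpa [binomialSeries, FormalMultilinearSeries.ofScalars_apply_eq, mul_comm] using
    Complex.one_add_cpow_hasFPowerSeriesOnBall_zero.hasSum (mem_eball_zero_one_of_norm_lt_one hz)

theorem Real.hasSum_one_add_rpow {a x : ℝ} (hx : |x| < 1) :
    HasSum (fun n ↦ Ring.choose a n * x ^ n) ((1 + x) ^ a) := by
  simpa [binomialSeries, FormalMultilinearSeries.ofScalars_apply_eq, mul_comm] using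
    Real.one_add_rpow_hasFPowerSeriesOnBall_zero.hasSum (mem_eball_zero_one_of_norm_lt_one hx)

theorem Real.hasSum_sqrt_one_sub {x : ℝ} (hx : |x| < 1) :
    HasSum (fun n ↦ (-1) ^ n * Ring.choose (1 / 2 : ℝ) n * x ^ n) (√(1 - x)) := by
  have := Real.hasSum_one_add_rpow (a := 1 / 2) (x := -x) (by simpa using hx)
  rw [← sub_eq_add_neg, ← Real.sqrt_eq_rpow] at this
  exact this.congr_fun fun n ↦ by rw [neg_pow]; ring

theorem prod_range_odd_div_even (n : ℕ) :
    ∏ i ∈ range n, (2 * (i : ℝ) + 1) / (2 * i + 2) = (2 * n).choose n / 4 ^ n := by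
  induction n with
  | zero => simp
  | succ k ih =>
    have hcb : ((k : ℝ) + 1) * (2 * (k + 1)).choose (k + 1) =
        2 * (2 * k + 1) * (2 * k).choose k := by
      exact_mod_cast Nat.succ_mul_centralBinom_succ k
    rw [prod_range_succ, ih]
    field_simp
    linear_combination (-2 * (4 : ℝ) ^ k) * hcb

theorem integral_sin_pow_two_mul (n : ℕ) :
    ∫ θ in 0..2 * π, sin θ ^ (2 * n) = 2 * π * ((2 * n).choose n / 4 ^ n) := by
  have hper : Function.Periodic (fun θ ↦ sin θ ^ (2 * n)) π := fun θ ↦ by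
    simp [sin_add_pi, pow_mul]
  have hint (a b : ℝ) : IntervalIntegrable (fun θ ↦ sin θ ^ (2 * n)) MeasureTheory.volume a b :=
    (continuous_sin.pow _).intervalIntegrable a b
  have hsecond : ∫ θ in π..2 * π, sin θ ^ (2 * n) = ∫ θ in 0..π, sin θ ^ (2 * n) := by
    simpa [two_mul] using hper.intervalIntegral_add_eq π 0
  rw [← intervalIntegral.integral_add_adjacent_intervals (hint 0 π) (hint π (2 * π)), hsecond,
    integral_sin_pow_even, prod_range_odd_div_even]
  ring

theorem hasSum_integral_sqrt_one_sub_mul_sin_sq {x : ℝ} (hx0 : 0 ≤ x) (hx1 : x < 1) :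
    HasSum (fun n : ℕ ↦ 2 * π * (-1 / (2 * n - 1) * ((2 * n).choose n / 4 ^ n) ^ 2) * x ^ n)
      (∫ θ in 0..2 * π, √(1 - x * sin θ ^ 2)) := by
  have key := intervalIntegral.hasSum_integral_of_dominated_convergence
    (F := fun n θ ↦ (-1) ^ n * Ring.choose (1 / 2 : ℝ) n * x ^ n * sin θ ^ (2 * n))
    (f := fun θ ↦ √(1 - x * sin θ ^ 2)) (a := 0) (b := 2 * π)
    (μ := MeasureTheory.volume) (fun n _ ↦ ‖Ring.choose (1 / 2 : ℝ) n * x ^ n‖)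
    (fun n ↦ (continuous_const.mul (continuous_sin.pow _)).aestronglyMeasurable) ?_ ?_
    intervalIntegrable_const ?_
  · simp_rw [intervalIntegral.integral_const_mul, integral_sin_pow_two_mul] at key
    have hterm (n : ℕ) : (-1) ^ n * Ring.choose (1 / 2 : ℝ) n * x ^ n *
        (2 * π * ((2 * n).choose n / 4 ^ n)) =
        2 * π * (-1 / (2 * n - 1) * ((2 * n).choose n / 4 ^ n) ^ 2) * x ^ n := by
      linear_combination (2 * π * x ^ n * ((2 * n).choose n / 4 ^ n)) *
        neg_one_pow_mul_choose_one_half (K := ℝ) n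
    exact key.congr_fun fun n ↦ (hterm n).symm
  · refine fun n ↦ Filter.Eventually.of_forall fun θ _ ↦ ?_
    rw [mul_assoc ((-1) ^ n), norm_mul, norm_mul ((-1) ^ n), norm_pow, norm_neg,
      norm_one, one_pow, one_mul]
    refine mul_le_of_le_one_right (norm_nonneg _) ?_
    rw [norm_pow, Real.norm_eq_abs]
    exact pow_le_one₀ (abs_nonneg _) (abs_sin_le_one θ)
  · exact Filter.Eventually.of_forall fun _ _ ↦
      summable_norm_choose_mul_pow _ (by rwa [norm_of_nonneg hx0])
  · refine Filter.Eventually.of_forall fun θ _ ↦ ?_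
    have hsin : sin θ ^ 2 ≤ 1 := sin_sq_le_one θ
    have hlt : |x * sin θ ^ 2| < 1 := by
      rw [abs_of_nonneg (by positivity)]
      nlinarith
    simpa only [mul_pow, ← pow_mul, mul_assoc] using Real.hasSum_sqrt_one_sub hlt

open Complex ComplexConjugate

theorem integral_cexp_int_mul_I (k : ℤ) :
    ∫ θ in 0..2 * π, cexp (k * I * θ) = if k = 0 then (2 * π : ℂ) else 0 := by
  split_ifs with hk
  · simp [hk]
  · have hkI : (k : ℂ) * I ≠ 0 := mul_ne_zero (Int.cast_ne_zero.mpr hk) I_ne_zero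
    have : (k : ℂ) * I * (2 * π) = k * (2 * π * I) := by ring
    simp [integral_exp_mul_complex hkI, this, exp_int_mul_two_pi_mul_I]

theorem integral_cexp_mul_conj_cexp (j k : ℤ) :
    ∫ θ in 0..2 * π, cexp (j * I * θ) * conj (cexp (k * I * θ)) =
      if j = k then (2 * π : ℂ) else 0 := by
  have (θ : ℝ) : cexp (j * I * θ) * conj (cexp (k * I * θ)) = cexp ((j - k : ℤ) * I * θ) := by
    rw [← exp_conj, ← Complex.exp_add]
    simp only [map_mul, conj_ofReal, conj_I, map_intCast]
    push_cast; ring_nf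
  simp_rw [this, integral_cexp_int_mul_I, sub_eq_zero]

noncomputable def trigSeries (c : ℕ → ℂ) (ω : ℕ → ℤ) (θ : ℝ) : ℂ := ∑' n, c n * cexp (ω n * I * θ)

section Parseval

variable {c : ℕ → ℂ} {ω : ℕ → ℤ}

theorem norm_exp_int_mul_I (k : ℤ) (θ : ℝ) : ‖cexp (k * I * θ)‖ = 1 := by
  rw [mul_right_comm, ← ofReal_intCast, ← ofReal_mul, norm_exp_ofReal_mul_I]

theorem norm_mul_cexp_int_mul_I (z : ℂ) (k : ℤ) (θ : ℝ) : ‖z * cexp (k * I * θ)‖ = ‖z‖ := by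
  rw [norm_mul, norm_exp_int_mul_I, mul_one]

theorem continuous_cexp_int_mul_I (k : ℤ) : Continuous fun θ : ℝ ↦ cexp (k * I * θ) := by
  fun_prop

variable (hc : Summable (‖c ·‖))
include hc

theorem hasSum_trigSeries (θ : ℝ) :
    HasSum (fun n ↦ c n * cexp (ω n * I * θ)) (trigSeries c ω θ) :=
  (hc.of_norm_bounded fun _ ↦ (norm_mul_cexp_int_mul_I _ _ θ).le).hasSum

theorem norm_trigSeries_le (θ : ℝ) : ‖trigSeries c ω θ‖ ≤ ∑' n, ‖c n‖ :=
  tsum_of_norm_bounded hc.hasSum fun _ ↦ (norm_mul_cexp_int_mul_I _ _ θ).le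

theorem continuous_trigSeries : Continuous (trigSeries c ω) :=
  continuous_tsum (fun _ ↦ continuous_const.mul (continuous_cexp_int_mul_I _)) hc
    fun _ θ ↦ (norm_mul_cexp_int_mul_I _ _ θ).le

variable (hω : Function.Injective ω)
include hω

theorem integral_cexp_mul_conj_trigSeries (n : ℕ) :
    ∫ θ in 0..2 * π, cexp (ω n * I * θ) * conj (trigSeries c ω θ) = 2 * π * conj (c n) := by
  have key := intervalIntegral.hasSum_integral_of_dominated_convergence
    (F := fun m θ ↦ conj (c m) * (cexp (ω n * I * θ) * conj (cexp (ω m * I * θ))))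
    (f := fun θ ↦ cexp (ω n * I * θ) * conj (trigSeries c ω θ)) (a := 0) (b := 2 * π)
    (μ := MeasureTheory.volume) (fun m _ ↦ ‖c m‖)
    (fun m ↦ (continuous_const.mul ((continuous_cexp_int_mul_I _).mul
      (continuous_cexp_int_mul_I _).star)).aestronglyMeasurable) ?_ ?_ intervalIntegrable_const ?_
  · simp_rw [intervalIntegral.integral_const_mul, integral_cexp_mul_conj_cexp, hω.eq_iff,
      mul_ite, mul_zero] at key
    rw [key.unique (hasSum_single n fun m hm ↦ if_neg (Ne.symm hm)), if_pos rfl, mul_comm]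
  · refine fun m ↦ Filter.Eventually.of_forall fun θ _ ↦ le_of_eq ?_
    rw [norm_mul, norm_mul, RCLike.norm_conj, RCLike.norm_conj, norm_exp_int_mul_I,
      norm_exp_int_mul_I, mul_one, mul_one]
  · exact Filter.Eventually.of_forall fun θ _ ↦ hc
  · refine Filter.Eventually.of_forall fun θ _ ↦ ?_
    have h := ((hasSum_trigSeries (ω := ω) hc θ).map (starRingEnd ℂ) continuous_conj).mul_left
      (cexp (ω n * I * θ))
    simp only [Function.comp_def, map_mul] at h
    simpa only [mul_left_comm] using h

theorem hasSum_integral_norm_sq_trigSeries :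
    HasSum (fun n ↦ 2 * π * ‖c n‖ ^ 2) (∫ θ in 0..2 * π, ‖trigSeries c ω θ‖ ^ 2) := by
  have key := intervalIntegral.hasSum_integral_of_dominated_convergence
    (F := fun n θ ↦ c n * (cexp (ω n * I * θ) * conj (trigSeries c ω θ)))
    (f := fun θ ↦ trigSeries c ω θ * conj (trigSeries c ω θ)) (a := 0) (b := 2 * π)
    (μ := MeasureTheory.volume) (fun n _ ↦ ‖c n‖ * ∑' m, ‖c m‖)
    (fun n ↦ (continuous_const.mul ((continuous_cexp_int_mul_I _).mul
      (continuous_trigSeries hc).star)).aestronglyMeasurable) ?_ ?_ intervalIntegrable_const ?_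
  · simp_rw [intervalIntegral.integral_const_mul, integral_cexp_mul_conj_trigSeries hc hω,
      mul_conj'] at key
    have hterm (n : ℕ) : c n * (2 * π * conj (c n)) = ((2 * π * ‖c n‖ ^ 2 : ℝ) : ℂ) := by
      rw [mul_left_comm, mul_conj']
      push_cast
      ring
    simp only [hterm, ← ofReal_pow, intervalIntegral.integral_ofReal] at key
    exact Complex.hasSum_ofReal.mp key
  · refine fun n ↦ Filter.Eventually.of_forall fun θ _ ↦ ?_
    rw [norm_mul, norm_mul, RCLike.norm_conj, norm_exp_int_mul_I, one_mul]
    exact mul_le_mul_of_nonneg_left (norm_trigSeries_le hc θ) (norm_nonneg _)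
  · exact Filter.Eventually.of_forall fun θ _ ↦ hc.mul_right _
  · refine Filter.Eventually.of_forall fun θ _ ↦ ?_
    simpa only [mul_assoc] using
      (hasSum_trigSeries (ω := ω) hc θ).mul_right (conj (trigSeries c ω θ))

end Parseval

theorem norm_add_mul_cexp_two_mul_I (a b θ : ℝ) :
    ‖((a + b) / 2 : ℂ) + (a - b) / 2 * cexp (2 * I * θ)‖ =
      √(a ^ 2 * Real.cos θ ^ 2 + b ^ 2 * Real.sin θ ^ 2) := by
  have hfactor : ((a + b) / 2 : ℂ) + (a - b) / 2 * cexp (2 * I * θ) =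
      cexp (θ * I) * (↑(a * Real.cos θ) + ↑(-(b * Real.sin θ)) * I) := by
    have h2 : cexp (2 * I * θ) = cexp (θ * I) ^ 2 := by rw [← Complex.exp_nat_mul]; ring_nf
    rw [h2, exp_mul_I]
    push_cast
    linear_combination (-(a + b) / 2 : ℂ) * Complex.cos_sq_add_sin_sq (θ : ℂ) +
      ((a + b) / 2 * Complex.sin θ ^ 2 : ℂ) * I_sq
  rw [hfactor, norm_mul, norm_exp_ofReal_mul_I, one_mul, norm_add_mul_I]
  ring_nf

theorem norm_cpow_one_half_sq (z : ℂ) : ‖z ^ (1 / 2 : ℂ)‖ ^ 2 = ‖z‖ := by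
  rw [show (1 / 2 : ℂ) = ((1 / 2 : ℝ) : ℂ) by norm_num, norm_cpow_real, ← sqrt_eq_rpow,
    sq_sqrt (norm_nonneg z)]

theorem hasSum_integral_norm_one_add_mul_cexp {h : ℝ} (hh : |h| < 1) :
    HasSum (fun n : ℕ ↦ 2 * π * ((2 * n).choose n / ((2 * n - 1) * 4 ^ n)) ^ 2 * h ^ (2 * n))
      (∫ θ in 0..2 * π, ‖1 + h * cexp (2 * I * θ)‖) := by
  set c : ℕ → ℂ := fun n ↦ ((Ring.choose (1 / 2 : ℝ) n * h ^ n : ℝ) : ℂ)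
  have hc : Summable (‖c ·‖) := by
    simpa only [c, norm_real] using summable_norm_choose_mul_pow (1 / 2 : ℝ) hh
  have hω : Function.Injective fun n : ℕ ↦ (2 * n : ℤ) := fun m n hmn ↦ by simpa using hmn
  have hsum (θ : ℝ) :
      trigSeries c (fun n ↦ 2 * n) θ = (1 + h * cexp (2 * I * θ)) ^ (1 / 2 : ℂ) := by
    refine (hasSum_trigSeries hc θ).unique ?_
    have hz : ‖(h : ℂ) * cexp (2 * I * θ)‖ < 1 := by
      rw [norm_mul, norm_real, show 2 * I * θ = ((2 * θ : ℝ) : ℂ) * I by push_cast; ring,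
        norm_exp_ofReal_mul_I, mul_one]
      exact hh
    convert Complex.hasSum_one_add_cpow hz using 1
    ext n
    rw [mul_pow, ← Complex.exp_nat_mul]
    simp only [c]
    push_cast
    ring_nf
  have hterm (n : ℕ) : 2 * π * ‖c n‖ ^ 2 =
      2 * π * ((2 * n).choose n / ((2 * n - 1) * 4 ^ n)) ^ 2 * h ^ (2 * n) := by
    rw [norm_real, Real.norm_eq_abs, sq_abs, mul_pow, choose_one_half_sq, pow_mul']
    ring
  simpa only [hterm, hsum, norm_cpow_one_half_sq] using hasSum_integral_norm_sq_trigSeries hc hω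

-- the arc length of `θ ↦ (a sin θ, b cos θ)`
noncomputable def ellipsePerimeter (a b : ℝ) : ℝ :=
  ∫ θ in 0..2 * π, √(a ^ 2 * Real.cos θ ^ 2 + b ^ 2 * Real.sin θ ^ 2)

theorem hasSum_ellipsePerimeter_maclaurin {a b e : ℝ} (ha : 0 < a) (hb : b ≠ 0)
    (he : e ^ 2 = 1 - b ^ 2 / a ^ 2) :
    HasSum (fun n : ℕ ↦
        2 * π * a * (-1 / (2 * n - 1) * ((2 * n).choose n / 4 ^ n) ^ 2 * e ^ (2 * n)))
      (ellipsePerimeter a b) := by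
  have he1 : e ^ 2 < 1 := by
    have : 0 < b ^ 2 / a ^ 2 := by positivity
    linarith
  have hint : ellipsePerimeter a b = a * ∫ θ in 0..2 * π, √(1 - e ^ 2 * Real.sin θ ^ 2) := by
    rw [ellipsePerimeter, ← intervalIntegral.integral_const_mul]
    refine intervalIntegral.integral_congr fun θ _ ↦ ?_
    have : a ^ 2 * Real.cos θ ^ 2 + b ^ 2 * Real.sin θ ^ 2 =
        a ^ 2 * (1 - e ^ 2 * Real.sin θ ^ 2) := by
      rw [he]
      field_simp
      linear_combination a ^ 2 * Real.cos_sq_add_sin_sq θ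
    simp only [this, Real.sqrt_mul (sq_nonneg a), Real.sqrt_sq ha.le]
  rw [hint]
  exact ((hasSum_integral_sqrt_one_sub_mul_sin_sq (sq_nonneg e) he1).mul_left a).congr_fun
    fun n ↦ by ring

theorem hasSum_ellipsePerimeter_ivory {a b : ℝ} (ha : 0 < a) (hb : 0 < b) :
    HasSum (fun n : ℕ ↦ π * (a + b) *
        (((2 * n).choose n / ((2 * n - 1) * 4 ^ n)) ^ 2 * ((a - b) / (a + b)) ^ (2 * n)))
      (ellipsePerimeter a b) := by
  have hab : 0 < a + b := by linarith
  have hh : |(a - b) / (a + b)| < 1 := by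
    rw [abs_div, abs_of_pos hab, div_lt_one hab, abs_lt]
    constructor <;> linarith
  have hint : ellipsePerimeter a b =
      (a + b) / 2 * ∫ θ in 0..2 * π, ‖1 + ((a - b) / (a + b) : ℝ) * cexp (2 * I * θ)‖ := by
    rw [ellipsePerimeter, ← intervalIntegral.integral_const_mul]
    refine intervalIntegral.integral_congr fun θ _ ↦ ?_
    rw [← norm_add_mul_cexp_two_mul_I, ← abs_of_pos (half_pos hab), ← Real.norm_eq_abs,
      ← norm_real, ← norm_mul]
    have hab' : (a + b : ℂ) ≠ 0 := by exact_mod_cast hab.ne'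
    congr 1
    push_cast
    field_simp
  rw [hint]
  exact ((hasSum_integral_norm_one_add_mul_cexp hh).mul_left ((a + b) / 2)).congr_fun
    fun n ↦ by ring

theorem maclaurin_eq_ivory_general (a b : ℝ) (hb : 0 < b) (hba : b ≤ a)
    (e : ℝ) (he : e ^ 2 = 1 - b ^ 2 / a ^ 2) :
    2 * a *
        ∑' m : ℕ, (-1 / (2 * (m : ℝ) - 1)) * ((Nat.choose (2 * m) m : ℝ) / 4 ^ m) ^ 2 *
          e ^ (2 * m)
    = (a + b) *
        ∑' n : ℕ, ((Nat.choose (2 * n) n : ℝ) / ((2 * (n : ℝ) - 1) * 4 ^ n)) ^ 2 *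
          ((a - b) / (a + b)) ^ (2 * n) := by
  have ha : 0 < a := hb.trans_le hba
  have hM := (hasSum_ellipsePerimeter_maclaurin ha hb.ne' he).tsum_eq
  have hI := (hasSum_ellipsePerimeter_ivory ha hb).tsum_eq
  rw [tsum_mul_left] at hM hI
  apply mul_left_cancel₀ pi_ne_zero
  linear_combination hM - hI

/-- Equality of Maclaurin's and Ivory's series for the ellipse perimeter (divided by π):
for `a ≥ b > 0` and `e² = 1 − b²/a²`. -/
theorem maclaurin_eq_ivory (a b : ℝ) (hb : 0 < b) (hba : b ≤ a)
    (e : ℝ) (he0 : 0 ≤ e) (he : e ^ 2 = 1 - b ^ 2 / a ^ 2) :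
    2 * a *
        ∑' m : ℕ, (-1 / (2 * (m : ℝ) - 1)) * ((Nat.choose (2 * m) m : ℝ) / 4 ^ m) ^ 2 *
          e ^ (2 * m)
    = (a + b) *
        ∑' n : ℕ, ((Nat.choose (2 * n) n : ℝ) / ((2 * (n : ℝ) - 1) * 4 ^ n)) ^ 2 *
          ((a - b) / (a + b)) ^ (2 * n) :=
  maclaurin_eq_ivory_general a b hb hba e he
end

section
/- For all natural numbers n and k, the generalized binomial coefficient with real upper argument satisfies choose(−n − 1/2, k) = (C(2n+2k, n+k) · C(n+k, k) / C(2n, n)) · (−1)^k / 4^k, where choose(r, k) = (∏_{j=0}^{k−1}(r − j))/k! for a real number r and natural number k, and C(·,·) is the ordinary binomial coefficient of natural numbers. -/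
/-!
Both sides satisfy the same first-order recurrence in `k`. On the left the ratio of consecutive
terms is `(-n - 1/2 - k) / (k + 1) = -(2(n+k) + 1) / (2(k + 1))`; on the right it comes from
`(m + 1) C(2m+2, m+1) = 2(2m + 1) C(2m, m)` with `m = n + k` and
`(m + 1) C(m, k) = C(m + 1, k + 1) (k + 1)`, the extra factor `1/4` being absorbed by `4^k`.
-/

/-- Generalized binomial coefficient `r(r−1)⋯(r−k+1)/k!` for real `r` and natural `k`. -/
noncomputable def gchoose (r : ℝ) (k : ℕ) : ℝ :=
  (∏ j ∈ Finset.range k, (r - j)) / (Nat.factorial k)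

open Nat

lemma succ_mul_gchoose_succ (r : ℝ) (k : ℕ) :
    (k + 1) * gchoose r (k + 1) = gchoose r k * (r - k) := by
  simp only [gchoose, Finset.prod_range_succ, factorial_succ, cast_mul, cast_succ]
  field_simp

lemma gchoose_neg_half_mul_four_pow (n k : ℕ) :
    gchoose (-n - 1 / 2) k * 4 ^ k * centralBinom n
      = (-1) ^ k * centralBinom (n + k) * (n + k).choose k := by
  induction k with
  | zero => simp [gchoose]
  | succ k ih =>
    have hcentral : ((n + k + 1) * centralBinom (n + k + 1) : ℝ)
        = 2 * (2 * (n + k) + 1) * centralBinom (n + k) := by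
      exact_mod_cast succ_mul_centralBinom_succ (n + k)
    have hchoose : ((n + k + 1) * (n + k).choose k : ℝ)
        = (n + k + 1).choose (k + 1) * (k + 1) := by
      exact_mod_cast add_one_mul_choose_eq (n + k) k
    apply mul_left_cancel₀ (by positivity : ((k + 1) * (n + k + 1) : ℝ) ≠ 0)
    linear_combination
      (n + k + 1 : ℝ) * 4 ^ (k + 1) * centralBinom n * succ_mul_gchoose_succ (-n - 1 / 2) k
      - 2 * (2 * (n + k) + 1) * (n + k + 1 : ℝ) * ih
      - (-1) ^ k * 2 * (2 * (n + k) + 1) * (centralBinom (n + k) : ℝ) * hchoose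
      + (-1) ^ k * ((n + k + 1).choose (k + 1) * (k + 1) : ℝ) * hcentral

/-- Lemma 1: `choose(−n−1/2, k) = (C(2n+2k,n+k) C(n+k,k) / C(2n,n)) · (−1)^k / 4^k`. -/
theorem gchoose_neg_half (n k : ℕ) :
    gchoose (-(n : ℝ) - 1 / 2) k
    = ((Nat.choose (2 * n + 2 * k) (n + k) : ℝ) * (Nat.choose (n + k) k : ℝ) /
        (Nat.choose (2 * n) n : ℝ)) * (-1) ^ k / 4 ^ k := by
  have h := gchoose_neg_half_mul_four_pow n k
  rw [← mul_add, ← centralBinom_eq_two_mul_choose, ← centralBinom_eq_two_mul_choose]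
  have hcentral_ne : (centralBinom n : ℝ) ≠ 0 := by exact_mod_cast (centralBinom_pos n).ne'
  generalize gchoose _ k = g at h ⊢
  field_simp
  linear_combination h
end

section
/- For every integer n ≥ 1, the sum S_n := ∑_{m=0}^{n} ((−1)^m / 2^m) · C(2m, m) · C(n, m) (a sum of rational numbers) equals (1/4^{n/2}) · C(n, n/2) if n is even, and equals 0 if n is odd. -/
/-!
Since `C(2m, m)` is the coefficient of `X^m` in `(1 + X)^(2m)`, the binomial theorem makes
`∑ₘ aᵐ C(2m, m) C(n, m)` the coefficient of `Xⁿ` in `(a (1 + X)² + X)ⁿ`. For `a = -1/2` the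
linear terms cancel and this polynomial is `(-1/2)ⁿ (1 + X²)ⁿ`, whose coefficient of `Xⁿ` is
`(-1/2)ⁿ C(n, n/2)` for even `n` and `0` for odd `n`.
-/

open Polynomial Finset

theorem sum_pow_mul_choose_two_mul_mul_choose_eq_coeff {R : Type*} [CommSemiring R] (a : R)
    (n : ℕ) :
    ∑ m ∈ range (n + 1), a ^ m * ((2 * m).choose m : R) * (n.choose m : R) =
      ((C a * (1 + X) ^ 2 + X) ^ n).coeff n := by
  rw [add_pow, finsetSum_coeff]
  refine sum_congr rfl fun m hm => ?_
  have hmn : m ≤ n := Nat.lt_succ_iff.mp (mem_range.mp hm)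
  rw [coeff_mul_natCast, coeff_mul_X_pow', if_pos (Nat.sub_le n m), Nat.sub_sub_self hmn,
    mul_pow, ← C_pow, ← pow_mul, coeff_C_mul, mul_comm 2 m, coeff_one_add_X_pow, mul_assoc]

theorem coeff_one_add_X_sq_pow (R : Type*) [CommSemiring R] (n k : ℕ) :
    ((1 + X ^ 2 : R[X]) ^ n).coeff k = if Even k then (n.choose (k / 2) : R) else 0 := by
  have hexpand : (1 + X ^ 2 : R[X]) ^ n = expand R 2 ((1 + X) ^ n) := by
    rw [map_pow, map_add, map_one, expand_X]
  simp only [hexpand, coeff_expand two_pos, coeff_one_add_X_pow, even_iff_two_dvd]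

theorem C_neg_half_mul_one_add_X_sq_add_X :
    C (-1 / 2 : ℚ) * (1 + X) ^ 2 + X = C (-1 / 2) * (1 + X ^ 2) := by
  have htwo : (2 : ℚ[X]) * C (-1 / 2) = -1 := by
    rw [← C_ofNat, ← C_mul, ← C_1, ← C_neg]
    norm_num [div_pow]
  linear_combination X * htwo

theorem alternating_central_binomial_sum_general (n : ℕ) :
    ∑ m ∈ Finset.range (n + 1),
        ((-1 : ℚ) ^ m / 2 ^ m) * (Nat.choose (2 * m) m : ℚ) * (Nat.choose n m : ℚ)
    = if Even n then (1 / 4 ^ (n / 2)) * (Nat.choose n (n / 2) : ℚ) else 0 := by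
  simp_rw [← div_pow]
  rw [sum_pow_mul_choose_two_mul_mul_choose_eq_coeff, C_neg_half_mul_one_add_X_sq_add_X,
    mul_pow, ← C_pow, coeff_C_mul, coeff_one_add_X_sq_pow]
  split_ifs with hn
  · obtain ⟨k, rfl⟩ := hn
    rw [← two_mul, Nat.mul_div_cancel_left k two_pos, pow_mul]
    norm_num [div_pow]
  · rw [mul_zero]

/-- Lemma 2: for `n ≥ 1`,
`∑_{m=0}^{n} ((−1)^m/2^m) C(2m,m) C(n,m)` equals `C(n, n/2)/4^{n/2}` if `n` is even
and `0` if `n` is odd. -/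
theorem alternating_central_binomial_sum (n : ℕ) (hn : 1 ≤ n) :
    ∑ m ∈ Finset.range (n + 1),
        ((-1 : ℚ) ^ m / 2 ^ m) * (Nat.choose (2 * m) m : ℚ) * (Nat.choose n m : ℚ)
    = if Even n then (1 / 4 ^ (n / 2)) * (Nat.choose n (n / 2) : ℚ) else 0 :=
  alternating_central_binomial_sum_general n
end

section
/- For all natural numbers n and m with m ≤ n, one has the identity of real numbers (−1/(4m−1)) · (C(4m,2m)/4^{2m}) · C(2m,m) · choose(−2m + 1/2, n−m) = ((−1)^{n−1}/(2n−1)) · (C(2n,n)/4^n) · choose(−n + 1/2, m) · C(n, n−m), where choose(r, k) = (∏_{j=0}^{k−1}(r − j))/k! is the generalized binomial coefficient for real r and natural k. -/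
theorem gchoose_eq_ringChoose (r : ℝ) (k : ℕ) : gchoose r k = Ring.choose r k := by
  rw [Ring.choose_eq_smul, smul_eq_mul, ← Polynomial.aeval_eq_smeval, Polynomial.aeval_def,
    Polynomial.eval₂_eq_eval_map, descPochhammer_map, descPochhammer_eval_eq_prod_range, gchoose,
    inv_mul_eq_div]

namespace Ring

section

variable {R : Type*} [NonAssocRing R] [Pow R ℕ] [NatPowAssoc R] [BinomialRing R]

theorem succ_nsmul_choose_succ (r : R) (k : ℕ) :
    (k + 1) • choose r (k + 1) = choose r k * (r - k) := by
  simpa [Nat.choose_succ_self_right, choose_one_right] using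
    choose_smul_choose r (Nat.le_succ k)

theorem centralBinom_nsmul_choose_mul_choose_sub {m n : ℕ} (r : R) (hmn : m ≤ n) :
    m.centralBinom • (choose r (2 * m) * choose (r - (2 * m : ℕ)) (n - m))
      = n.choose m • (choose r n * choose (r - n) m) := by
  have h2m := choose_smul_choose r (show 2 * m ≤ n + m by omega)
  have hn := choose_smul_choose r (show n ≤ n + m by omega)
  rw [show n + m - 2 * m = n - m by omega] at h2m
  rw [Nat.add_sub_cancel_left] at hn
  have hcoeff : m.centralBinom * (n + m).choose (2 * m) = n.choose m * (n + m).choose n := by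
    rw [Nat.centralBinom_eq_two_mul_choose, mul_comm, Nat.choose_mul (by omega : m ≤ 2 * m),
      Nat.choose_symm_add, mul_comm, Nat.add_sub_cancel, two_mul, Nat.add_sub_cancel]
  rw [← h2m, ← hn, smul_smul, smul_smul, hcoeff]

end

theorem choose_one_half (n : ℕ) :
    choose (1 / 2 : ℝ) n = -(-1) ^ n / (2 * n - 1) * (n.centralBinom / 4 ^ n) := by
  have hodd (k : ℕ) : (2 * k - 1 : ℝ) ≠ 0 := by
    rw [sub_ne_zero]; norm_cast; omega
  induction n with
  | zero => norm_num
  | succ n ih =>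
    have hstep := succ_nsmul_choose_succ (1 / 2 : ℝ) n
    rw [nsmul_eq_mul, Nat.cast_succ, ih] at hstep
    have hcentral : ((n : ℝ) + 1) * (n + 1).centralBinom = 2 * (2 * n + 1) * n.centralBinom := by
      exact_mod_cast Nat.succ_mul_centralBinom_succ n
    have hodd' := hodd (n + 1)
    refine mul_left_cancel₀ (Nat.cast_add_one_ne_zero n) ?_
    rw [hstep, pow_succ, pow_succ]
    field_simp [hodd n]
    push_cast at hodd' ⊢
    linear_combination -2 * (2 * (n : ℝ) - 1) * hcentral

end Ring

/-- The coefficient identity from Step 2: for `m ≤ n`,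
`(−1/(4m−1)) (C(4m,2m)/4^{2m}) C(2m,m) choose(−2m+1/2, n−m)
  = ((−1)^{n−1}/(2n−1)) (C(2n,n)/4^n) choose(−n+1/2, m) C(n, n−m)`. -/
theorem step_two_coefficient_identity (n m : ℕ) (hmn : m ≤ n) :
    (-1 / (4 * (m : ℝ) - 1)) * ((Nat.choose (4 * m) (2 * m) : ℝ) / 4 ^ (2 * m)) *
      (Nat.choose (2 * m) m : ℝ) * gchoose (-2 * (m : ℝ) + 1 / 2) (n - m)
    = ((-1 : ℝ) ^ ((n : ℤ) - 1) / (2 * (n : ℝ) - 1)) * ((Nat.choose (2 * n) n : ℝ) / 4 ^ n) *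
      gchoose (-(n : ℝ) + 1 / 2) m * (Nat.choose n (n - m) : ℝ) := by
  have hm : -1 / (4 * (m : ℝ) - 1) * ((Nat.choose (4 * m) (2 * m) : ℝ) / 4 ^ (2 * m))
      = Ring.choose (1 / 2) (2 * m) := by
    rw [Ring.choose_one_half, Even.neg_one_pow (even_two_mul m),
      Nat.centralBinom_eq_two_mul_choose, ← mul_assoc]
    push_cast
    ring
  have hn : (-1 : ℝ) ^ ((n : ℤ) - 1) / (2 * (n : ℝ) - 1) * ((Nat.choose (2 * n) n : ℝ) / 4 ^ n)
      = Ring.choose (1 / 2) n := by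
    rw [Ring.choose_one_half, zpow_sub_one₀ (by norm_num), zpow_natCast,
      Nat.centralBinom_eq_two_mul_choose]
    ring
  have key := Ring.centralBinom_nsmul_choose_mul_choose_sub (1 / 2 : ℝ) hmn
  rw [nsmul_eq_mul, nsmul_eq_mul, Nat.centralBinom_eq_two_mul_choose] at key
  rw [hm, hn, gchoose_eq_ringChoose, gchoose_eq_ringChoose, Nat.choose_symm hmn,
    show -2 * (m : ℝ) + 1 / 2 = 1 / 2 - (2 * m : ℕ) by push_cast; ring,
    show -(n : ℝ) + 1 / 2 = 1 / 2 - n by ring]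
  linear_combination key
end
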